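/- Under the assumptions of the previous statement (non-homogeneous Markov chain with all δ(π_{i,i+1}) ≤ 1 − α, functions f_i bounded by C with mean zero), the functions Z_k = Σ_{i=k}^n E[f_i(X_i) | X_k] satisfy ‖Z_k‖_∞ ≤ 2C/α for every 1 ≤ k ≤ n. -/

import Mathlib

open MeasureTheory ProbabilityTheory

/-! The operator `g ↦ ∫ g dπ(x, ·)` of a Markov kernel shrinks the oscillation of `g` by the
factor `δ(π) ≤ 1 - α`: split the two measures `π(x₁, ·)`, `π(x₂, ·)` along a Hahn decomposition
of their difference. Hence `π_{k,i} f_i`, which represents `E[f_i(X_i) | X_k]`, has oscillation at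
most `2C(1-α)^(i-k)`. It is centred, since its mean is `E f_i(X_i) = 0`, so it is bounded by its
oscillation, and summing the geometric series gives `2C/α`. -/

noncomputable def contractionCoeff {S : Type*} [MeasurableSpace S]
    (π : ProbabilityTheory.Kernel S S) : ℝ :=
  sSup {r : ℝ | ∃ x₁ x₂ : S, ∃ A : Set S, MeasurableSet A ∧
    r = |(π x₁ A).toReal - (π x₂ A).toReal|}

/-- The σ-field `σ(X_1, …, X_i)` generated by the chain up to time `i`. -/
def pastFiltration {Ω S : Type*} [MeasurableSpace S] (X : ℕ → Ω → S) (i : ℕ) :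
    MeasurableSpace Ω :=
  ⨆ j ∈ Set.Icc 1 i, MeasurableSpace.comap (X j) inferInstance

section TotalVariation

variable {S : Type*} [MeasurableSpace S]

lemma integrable_of_nonneg_of_le {μ : Measure S} [IsFiniteMeasure μ] {g : S → ℝ}
    (hg : Measurable g) {D : ℝ} (hg0 : ∀ x, 0 ≤ g x) (hgD : ∀ x, g x ≤ D) : Integrable g μ :=
  .of_bound hg.aestronglyMeasurable D (.of_forall fun x =>
    (Real.norm_of_nonneg (hg0 x)).trans_le (hgD x))

lemma integral_sub_integral_le_of_le {μ ν : Measure S} [IsFiniteMeasure μ] (hνμ : ν ≤ μ)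
    {g : S → ℝ} (hg : Measurable g) {D : ℝ} (hg0 : ∀ x, 0 ≤ g x) (hgD : ∀ x, g x ≤ D) :
    ∫ x, g x ∂μ - ∫ x, g x ∂ν ≤ D * (μ.real Set.univ - ν.real Set.univ) := by
  have : IsFiniteMeasure ν := isFiniteMeasure_of_le μ hνμ
  have hint : ∀ ρ : Measure S, IsFiniteMeasure ρ → Integrable g ρ := fun _ _ =>
    integrable_of_nonneg_of_le hg hg0 hgD
  have hmono : ∫ x, D - g x ∂ν ≤ ∫ x, D - g x ∂μ :=
    integral_mono_measure hνμ (.of_forall fun x => sub_nonneg.2 (hgD x))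
      ((integrable_const D).sub (hint μ inferInstance))
  rw [integral_sub (integrable_const D) (hint ν inferInstance),
    integral_sub (integrable_const D) (hint μ inferInstance), integral_const, integral_const,
    smul_eq_mul, smul_eq_mul] at hmono
  linarith

/-- Via a Hahn decomposition `S = s ∪ sᶜ` of `μ - ν`: on `s` the excess mass of `μ` is at most
`d` and `g ≤ D`, on `sᶜ` the measure `μ` is the smaller one and `g ≥ 0`. -/
lemma integral_sub_integral_le_mul {μ ν : Measure S} [IsFiniteMeasure μ] [IsFiniteMeasure ν]
    {d : ℝ} (hd : ∀ A, MeasurableSet A → μ.real A - ν.real A ≤ d)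
    {g : S → ℝ} (hg : Measurable g) {D : ℝ} (hD : 0 ≤ D) (hg0 : ∀ x, 0 ≤ g x)
    (hgD : ∀ x, g x ≤ D) :
    ∫ x, g x ∂μ - ∫ x, g x ∂ν ≤ D * d := by
  obtain ⟨s, hs, hνμ, hμν⟩ := hahn_decomposition μ ν
  have hint : ∀ ρ : Measure S, IsFiniteMeasure ρ → Integrable g ρ := fun _ _ =>
    integrable_of_nonneg_of_le hg hg0 hgD
  have h_on_s : ∫ x in s, g x ∂μ - ∫ x in s, g x ∂ν ≤ D * d := by
    refine (integral_sub_integral_le_of_le ?_ hg hg0 hgD).trans ?_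
    · exact Measure.le_iff.2 fun t ht => by
        simpa only [Measure.restrict_apply ht] using hνμ _ (ht.inter hs) Set.inter_subset_right
    · rw [measureReal_restrict_apply_univ, measureReal_restrict_apply_univ]
      exact mul_le_mul_of_nonneg_left (hd s hs) hD
  have h_on_compl : ∫ x in sᶜ, g x ∂μ ≤ ∫ x in sᶜ, g x ∂ν := by
    refine integral_mono_measure ?_ (.of_forall hg0) (hint _ inferInstance)
    exact Measure.le_iff.2 fun t ht => by
      simpa only [Measure.restrict_apply ht] using
        hμν _ (ht.inter hs.compl) Set.inter_subset_right
  rw [← integral_add_compl hs (hint μ inferInstance),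
    ← integral_add_compl hs (hint ν inferInstance)]
  linarith

lemma abs_integral_sub_integral_le_mul [Nonempty S] {μ ν : Measure S} [IsProbabilityMeasure μ]
    [IsProbabilityMeasure ν] {d : ℝ} (hd : ∀ A, MeasurableSet A → |μ.real A - ν.real A| ≤ d)
    {g : S → ℝ} (hg : Measurable g) {D : ℝ} (hosc : ∀ x y, |g x - g y| ≤ D) :
    |∫ x, g x ∂μ - ∫ x, g x ∂ν| ≤ D * d := by
  have hbdd : BddBelow (Set.range g) :=
    ⟨g (Classical.arbitrary S) - D, by
      rintro _ ⟨y, rfl⟩; linarith [(abs_sub_le_iff.1 (hosc (Classical.arbitrary S) y)).1]⟩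
  set m := ⨅ x, g x
  have hm : ∀ x, 0 ≤ g x - m := fun x => sub_nonneg.2 (ciInf_le hbdd x)
  have hmD : ∀ x, g x - m ≤ D := fun x => by
    have : g x - D ≤ m := le_ciInf fun y => by linarith [(abs_sub_le_iff.1 (hosc x y)).1]
    linarith
  have hD : 0 ≤ D := (hm (Classical.arbitrary S)).trans (hmD _)
  have hgm : Measurable fun x => g x - m := hg.sub measurable_const
  have hint : ∀ ρ : Measure S, IsProbabilityMeasure ρ → Integrable g ρ := fun ρ _ => by
    have : Integrable (fun x => g x - m) ρ := integrable_of_nonneg_of_le hgm hm hmD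
    exact integrable_add_const_iff.1 (by simpa only [sub_eq_add_neg] using this)
  have hshift : ∀ ρ : Measure S, IsProbabilityMeasure ρ → ∫ x, g x - m ∂ρ = ∫ x, g x ∂ρ - m :=
    fun ρ _ => by simp [integral_sub (hint ρ inferInstance) (integrable_const m)]
  have h₁ := integral_sub_integral_le_mul (fun A hA => (le_abs_self _).trans (hd A hA))
    hgm hD hm hmD
  have h₂ := integral_sub_integral_le_mul
    (fun A hA => (le_abs_self _).trans (abs_sub_comm (μ.real A) _ ▸ hd A hA)) hgm hD hm hmD
  rw [hshift μ inferInstance, hshift ν inferInstance] at h₁ h₂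
  exact abs_sub_le_iff.2 ⟨by linarith, by linarith⟩

end TotalVariation

lemma abs_le_of_integral_eq_zero {Ω : Type*} [MeasurableSpace Ω] {μ : Measure Ω}
    [IsProbabilityMeasure μ] {φ : Ω → ℝ} (hφ : Integrable φ μ) (hφ0 : ∫ ω, φ ω ∂μ = 0) {c D : ℝ}
    (h : ∀ ω, |c - φ ω| ≤ D) : |c| ≤ D := by
  have hc : c = ∫ ω, c - φ ω ∂μ := by simp [integral_sub (integrable_const c) hφ, hφ0]
  simpa [← hc] using
    norm_integral_le_of_norm_le_const (μ := μ) (f := fun ω => c - φ ω) (.of_forall h)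

lemma sum_Icc_pow_sub_le {r : ℝ} (hr0 : 0 ≤ r) (hr1 : r < 1) (k n : ℕ) :
    ∑ i ∈ Finset.Icc k n, r ^ (i - k) ≤ 1 / (1 - r) := by
  rw [← Finset.Ico_add_one_right_eq_Icc, Finset.sum_Ico_eq_sum_range]
  simp only [Nat.add_sub_cancel_left]
  have := geom_sum_Ico_le_of_lt_one (m := 0) (n := n + 1 - k) hr0 hr1
  rwa [pow_zero, ← Finset.range_eq_Ico] at this

section KernelOperator

variable {S : Type*} [MeasurableSpace S]

lemma abs_sub_le_contractionCoeff (π : Kernel S S) [IsMarkovKernel π] (x₁ x₂ : S) {A : Set S}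
    (hA : MeasurableSet A) : |(π x₁).real A - (π x₂).real A| ≤ contractionCoeff π := by
  refine le_csSup ⟨1, ?_⟩ ⟨x₁, x₂, A, hA, rfl⟩
  rintro _ ⟨y₁, y₂, B, -, rfl⟩
  exact abs_sub_le_of_nonneg_of_le ENNReal.toReal_nonneg measureReal_le_one
    ENNReal.toReal_nonneg measureReal_le_one

noncomputable def kernelOp (π : Kernel S S) (g : S → ℝ) : S → ℝ :=
  fun x => ∫ y, g y ∂π x

lemma measurable_kernelOp (π : Kernel S S) [IsSFiniteKernel π] {g : S → ℝ} (hg : Measurable g) :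
    Measurable (kernelOp π g) :=
  ((hg.comp measurable_snd).stronglyMeasurable.integral_kernel_prod_right' (κ := π)).measurable

lemma abs_kernelOp_le (π : Kernel S S) [IsMarkovKernel π] {g : S → ℝ} {M : ℝ}
    (hgM : ∀ x, |g x| ≤ M) (x : S) : |kernelOp π g x| ≤ M := by
  simpa [kernelOp] using norm_integral_le_of_norm_le_const (μ := π x) (f := g) (.of_forall hgM)

lemma abs_kernelOp_sub_le (π : Kernel S S) [IsMarkovKernel π] {g : S → ℝ} (hg : Measurable g)
    {D : ℝ} (hosc : ∀ x y, |g x - g y| ≤ D) (x₁ x₂ : S) :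
    |kernelOp π g x₁ - kernelOp π g x₂| ≤ D * contractionCoeff π :=
  have : Nonempty S := ⟨x₁⟩
  abs_integral_sub_integral_le_mul (fun _ => abs_sub_le_contractionCoeff π x₁ x₂) hg hosc

/-- `transitionOp π k m` is `π_{k,k+m} = π_k ∘ π_{k+1} ∘ ⋯ ∘ π_{k+m-1}` acting on functions. -/
noncomputable def transitionOp (π : ℕ → Kernel S S) (k : ℕ) : ℕ → (S → ℝ) → S → ℝ
  | 0, g => g
  | m + 1, g => transitionOp π k m (kernelOp (π (k + m)) g)

variable (π : ℕ → Kernel S S) [∀ i, IsMarkovKernel (π i)] (k : ℕ)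

lemma measurable_transitionOp (m : ℕ) {g : S → ℝ} (hg : Measurable g) :
    Measurable (transitionOp π k m g) := by
  induction m generalizing g with
  | zero => exact hg
  | succ m ih => exact ih (measurable_kernelOp _ hg)

lemma abs_transitionOp_le (m : ℕ) {g : S → ℝ} {M : ℝ} (hgM : ∀ x, |g x| ≤ M) (x : S) :
    |transitionOp π k m g x| ≤ M := by
  induction m generalizing g with
  | zero => exact hgM x
  | succ m ih => exact ih (abs_kernelOp_le _ hgM)

lemma abs_transitionOp_sub_le {r : ℝ} (hπr : ∀ i, contractionCoeff (π i) ≤ r)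
    (m : ℕ) {g : S → ℝ} (hg : Measurable g) {D : ℝ} (hosc : ∀ x y, |g x - g y| ≤ D) (x y : S) :
    |transitionOp π k m g x - transitionOp π k m g y| ≤ D * r ^ m := by
  induction m generalizing g D with
  | zero => simpa only [transitionOp, pow_zero, mul_one] using hosc x y
  | succ m ih =>
    have hD : 0 ≤ D := (abs_nonneg _).trans (hosc x x)
    have hosc' : ∀ x y, |kernelOp (π (k + m)) g x - kernelOp (π (k + m)) g y| ≤ D * r :=
      fun x y => (abs_kernelOp_sub_le _ hg hosc x y).trans
        (mul_le_mul_of_nonneg_left (hπr _) hD)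
    calc _ ≤ D * r * r ^ m := ih (measurable_kernelOp _ hg) hosc'
      _ = D * r ^ (m + 1) := by ring

end KernelOperator

section MarkovChain

variable {Ω S : Type*} [MeasurableSpace S]

lemma comap_le_pastFiltration (X : ℕ → Ω → S) {i : ℕ} (hi : 1 ≤ i) :
    MeasurableSpace.comap (X i) inferInstance ≤ pastFiltration X i :=
  le_biSup (fun j => MeasurableSpace.comap (X j) inferInstance) ⟨hi, le_rfl⟩

lemma pastFiltration_mono (X : ℕ → Ω → S) : Monotone (pastFiltration X) :=
  fun _ _ hij => biSup_mono fun _ hj => ⟨hj.1, hj.2.trans hij⟩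

variable [MeasurableSpace Ω]

lemma pastFiltration_le {X : ℕ → Ω → S} (hX : ∀ i, Measurable (X i)) (i : ℕ) :
    pastFiltration X i ≤ ‹MeasurableSpace Ω› :=
  iSup₂_le fun j _ => (hX j).comap_le

/-- `π i` is the law of `X (i + 1)` given the past `X 1, …, X i`, tested on bounded
measurable functions. -/
def HasTransitionKernels (P : Measure Ω) (X : ℕ → Ω → S) (π : ℕ → Kernel S S) : Prop :=
  ∀ i, 1 ≤ i → ∀ g : S → ℝ, Measurable g → (∃ M, ∀ x, |g x| ≤ M) →
    P[(fun ω => g (X (i + 1) ω)) | pastFiltration X i]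
      =ᵐ[P] fun ω => ∫ y, g y ∂(π i (X i ω))

variable {P : Measure Ω} [IsProbabilityMeasure P] {X : ℕ → Ω → S} {π : ℕ → Kernel S S}
  [∀ i, IsMarkovKernel (π i)]

lemma condExp_pastFiltration_eq_transitionOp (hX : ∀ i, Measurable (X i))
    (hπ : HasTransitionKernels P X π) {k : ℕ} (hk : 1 ≤ k) (m : ℕ) {g : S → ℝ}
    (hg : Measurable g) {M : ℝ} (hgM : ∀ x, |g x| ≤ M) :
    P[(fun ω => g (X (k + m) ω)) | pastFiltration X k]
      =ᵐ[P] fun ω => transitionOp π k m g (X k ω) := by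
  induction m generalizing g with
  | zero =>
    refine .of_eq (condExp_of_stronglyMeasurable (pastFiltration_le hX k) ?_ ?_)
    · exact ((hg.comp (comap_measurable (X k))).mono (comap_le_pastFiltration X hk)
        le_rfl).stronglyMeasurable
    · exact .of_bound (hg.comp (hX k)).aestronglyMeasurable M (.of_forall fun ω => hgM _)
  | succ m ih =>
    calc P[(fun ω => g (X (k + m + 1) ω)) | pastFiltration X k]
        =ᵐ[P] P[P[(fun ω => g (X (k + m + 1) ω)) | pastFiltration X (k + m)] |
          pastFiltration X k] :=
          (condExp_condExp_of_le (pastFiltration_mono X (Nat.le_add_right k m))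
            (pastFiltration_le hX _)).symm
      _ =ᵐ[P] P[(fun ω => kernelOp (π (k + m)) g (X (k + m) ω)) | pastFiltration X k] :=
          condExp_congr_ae (hπ _ (hk.trans (Nat.le_add_right k m)) g hg ⟨M, hgM⟩)
      _ =ᵐ[P] fun ω => transitionOp π k (m + 1) g (X k ω) :=
          ih (measurable_kernelOp _ hg) (abs_kernelOp_le _ hgM)

lemma condExp_comap_eq_transitionOp (hX : ∀ i, Measurable (X i))
    (hπ : HasTransitionKernels P X π) {k i : ℕ} (hk : 1 ≤ k) (hki : k ≤ i) {g : S → ℝ}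
    (hg : Measurable g) {M : ℝ} (hgM : ∀ x, |g x| ≤ M) :
    P[(fun ω => g (X i ω)) | MeasurableSpace.comap (X k) inferInstance]
      =ᵐ[P] fun ω => transitionOp π k (i - k) g (X k ω) := by
  obtain ⟨m, rfl⟩ := Nat.exists_eq_add_of_le hki
  rw [Nat.add_sub_cancel_left]
  calc P[(fun ω => g (X (k + m) ω)) | MeasurableSpace.comap (X k) inferInstance]
      =ᵐ[P] P[P[(fun ω => g (X (k + m) ω)) | pastFiltration X k] |
        MeasurableSpace.comap (X k) inferInstance] :=
        (condExp_condExp_of_le (comap_le_pastFiltration X hk) (pastFiltration_le hX k)).symm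
    _ =ᵐ[P] P[(fun ω => transitionOp π k m g (X k ω)) |
        MeasurableSpace.comap (X k) inferInstance] :=
        condExp_congr_ae (condExp_pastFiltration_eq_transitionOp hX hπ hk m hg hgM)
    _ = fun ω => transitionOp π k m g (X k ω) := by
      refine condExp_of_stronglyMeasurable (hX k).comap_le ?_ ?_
      · exact ((measurable_transitionOp π k m hg).comp
          (comap_measurable (X k))).stronglyMeasurable
      · exact .of_bound ((measurable_transitionOp π k m hg).comp (hX k)).aestronglyMeasurable M
          (.of_forall fun ω => abs_transitionOp_le π k m hgM _)

lemma abs_transitionOp_le_of_integral_eq_zero (hX : ∀ i, Measurable (X i))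
    (hπ : HasTransitionKernels P X π) {r : ℝ} (hπr : ∀ i, contractionCoeff (π i) ≤ r)
    {k i : ℕ} (hk : 1 ≤ k) (hki : k ≤ i) {g : S → ℝ} (hg : Measurable g) {C : ℝ}
    (hgC : ∀ x, |g x| ≤ C) (hmean : ∫ ω, g (X i ω) ∂P = 0) (x : S) :
    |transitionOp π k (i - k) g x| ≤ 2 * C * r ^ (i - k) := by
  have hosc : ∀ x y, |g x - g y| ≤ 2 * C := fun x y => by
    linarith [abs_sub (g x) (g y), hgC x, hgC y]
  have hmean' : ∫ ω, transitionOp π k (i - k) g (X k ω) ∂P = 0 := by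
    rw [← integral_congr_ae (condExp_comap_eq_transitionOp hX hπ hk hki hg hgC),
      integral_condExp (hX k).comap_le, hmean]
  refine abs_le_of_integral_eq_zero ?_ hmean' fun ω =>
    abs_transitionOp_sub_le π k hπr _ hg hosc x (X k ω)
  exact .of_bound ((measurable_transitionOp π k _ hg).comp (hX k)).aestronglyMeasurable C
    (.of_forall fun ω => abs_transitionOp_le π k _ hgC _)

end MarkovChain

theorem abs_Z_le_general {S Ω : Type*} [MeasurableSpace S] [MeasurableSpace Ω]
    (P : Measure Ω) [IsProbabilityMeasure P]
    (X : ℕ → Ω → S) (hX : ∀ i, Measurable (X i))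
    (π : ℕ → ProbabilityTheory.Kernel S S) [∀ i, IsMarkovKernel (π i)]
    (hMarkov : ∀ i, 1 ≤ i → ∀ g : S → ℝ, Measurable g → (∃ M, ∀ x, |g x| ≤ M) →
      P[(fun ω => g (X (i + 1) ω)) | pastFiltration X i]
        =ᵐ[P] fun ω => ∫ y, g y ∂(π i (X i ω)))
    (α : ℝ) (hα0 : 0 < α) (hα1 : α ≤ 1)
    (hδ : ∀ i, contractionCoeff (π i) ≤ 1 - α)
    (C : ℝ) (n : ℕ) (f : ℕ → S → ℝ) (hfmeas : ∀ j, Measurable (f j))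
    (hfC : ∀ j x, |f j x| ≤ C)
    (hmean : ∀ j, ∫ ω, f j (X j ω) ∂P = 0)
    (k : ℕ) (h1k : 1 ≤ k) :
    ∀ᵐ ω ∂P,
      |∑ i ∈ Finset.Icc k n,
          (P[(fun ω => f i (X i ω)) | MeasurableSpace.comap (X k) inferInstance]) ω|
        ≤ 2 * C / α := by
  have hcond : ∀ᵐ ω ∂P, ∀ i ∈ Finset.Icc k n,
      P[(fun ω => f i (X i ω)) | MeasurableSpace.comap (X k) inferInstance] ω
        = transitionOp π k (i - k) (f i) (X k ω) :=
    (Filter.eventually_all_finset _).2 fun i hi =>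
      condExp_comap_eq_transitionOp hX hMarkov h1k (Finset.mem_Icc.1 hi).1 (hfmeas i) (hfC i)
  filter_upwards [hcond] with ω hω
  have hC : 0 ≤ C := (abs_nonneg _).trans (hfC k (X k ω))
  calc _ = |∑ i ∈ Finset.Icc k n, transitionOp π k (i - k) (f i) (X k ω)| := by
        rw [Finset.sum_congr rfl hω]
    _ ≤ ∑ i ∈ Finset.Icc k n, 2 * C * (1 - α) ^ (i - k) :=
        (Finset.abs_sum_le_sum_abs _ _).trans <| Finset.sum_le_sum fun i hi =>
          abs_transitionOp_le_of_integral_eq_zero hX hMarkov hδ h1k (Finset.mem_Icc.1 hi).1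
            (hfmeas i) (hfC i) (hmean i) _
    _ = 2 * C * ∑ i ∈ Finset.Icc k n, (1 - α) ^ (i - k) := (Finset.mul_sum _ _ _).symm
    _ ≤ 2 * C * (1 / (1 - (1 - α))) :=
        mul_le_mul_of_nonneg_left (sum_Icc_pow_sub_le (by linarith) (by linarith) k n)
          (by linarith)
    _ = 2 * C / α := by rw [sub_sub_cancel, mul_one_div]

/-- with the setup of Statement 5, the resolvent-type variables
`Z_k = Σ_{i=k}^n E[f_i(X_i) | X_k]` satisfy `‖Z_k‖_∞ ≤ 2C/α` for `1 ≤ k ≤ n`. -/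
theorem abs_Z_le {S Ω : Type*} [MeasurableSpace S] [MeasurableSpace Ω]
    (P : Measure Ω) [IsProbabilityMeasure P]
    (X : ℕ → Ω → S) (hX : ∀ i, Measurable (X i))
    (π : ℕ → ProbabilityTheory.Kernel S S) [∀ i, IsMarkovKernel (π i)]
    (hMarkov : ∀ i, 1 ≤ i → ∀ g : S → ℝ, Measurable g → (∃ M, ∀ x, |g x| ≤ M) →
      P[(fun ω => g (X (i + 1) ω)) | pastFiltration X i]
        =ᵐ[P] fun ω => ∫ y, g y ∂(π i (X i ω)))
    (α : ℝ) (hα0 : 0 < α) (hα1 : α ≤ 1)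
    (hδ : ∀ i, contractionCoeff (π i) ≤ 1 - α)
    (C : ℝ) (n : ℕ) (f : ℕ → S → ℝ) (hfmeas : ∀ j, Measurable (f j))
    (hfC : ∀ j x, |f j x| ≤ C)
    (hmean : ∀ j, ∫ ω, f j (X j ω) ∂P = 0)
    (k : ℕ) (h1k : 1 ≤ k) (hkn : k ≤ n) :
    ∀ᵐ ω ∂P,
      |∑ i ∈ Finset.Icc k n,
          (P[(fun ω => f i (X i ω)) | MeasurableSpace.comap (X k) inferInstance]) ω|
        ≤ 2 * C / α :=
  abs_Z_le_general P X hX π hMarkov α hα0 hα1 hδ C n f hfmeas hfC hmean k h1k
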